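/- Let v ∈ ℝⁿ be a vector lying in the trace-zero hyperplane (∑_j v_j = 0) and let λ ∈ ℝ with |λ| ≤ 1/(2‖v‖_∞) and v ≠ 0. If W_1, …, W_n are i.i.d. Exp(1) random variables and S = ∑_j v_j log W_j, then log E[e^{λS}] = ∑_j log Γ(1 + λ v_j), and there exists an absolute constant C such that |log E[e^{λS}] − (π²/12) λ² ∑_j v_j²| ≤ C |λ|³ ∑_j |v_j|³. -/

import Mathlib

open MeasureTheory ProbabilityTheory
open Real Filter Topology Finset Set

/-!
By independence, the cumulant generating function of `S` is `∑ⱼ log E[Wⱼ ^ (λ vⱼ)]`, and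
`E[W ^ t] = Γ(1 + t)` for `W ~ Exp(1)` and `t > -1`. Euler's product for `Γ` gives, for `s > -1`,
`log Γ(1 + s) + γ s = ∑_{k ≥ 1} (s/k - log (1 + s/k))`. For `|s| ≤ 1/2` each summand is
`s² / (2 k²)` up to `2 |s|³ / k²`, so summing `∑ 1/k² = π²/6` gives
`|log Γ(1 + s) + γ s - (π²/12) s²| ≤ (π²/3) |s|³`. The constraint on `λ` makes
`|λ vⱼ| ≤ 1/2`, and the linear terms `γ λ vⱼ` cancel because `∑ⱼ vⱼ = 0`.
-/

lemma abs_log_one_add_sub_self_le {x : ℝ} (hx : |x| ≤ 1 / 2) :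
    |log (1 + x) - x| ≤ 2 * x ^ 2 := by
  have h := abs_log_sub_add_sum_range_le (x := -x) (by rw [abs_neg]; linarith) 1
  rw [abs_neg, sub_neg_eq_add] at h
  norm_num at h
  calc |log (1 + x) - x| = |-x + log (1 + x)| := by ring_nf
    _ ≤ x ^ 2 / (1 - |x|) := h
    _ ≤ 2 * x ^ 2 := by
      rw [div_le_iff₀ (by linarith)]
      nlinarith [sq_nonneg x]

lemma abs_log_one_add_sub_self_add_sq_div_two_le {x : ℝ} (hx : |x| ≤ 1 / 2) :
    |log (1 + x) - x + x ^ 2 / 2| ≤ 2 * |x| ^ 3 := by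
  have h := abs_log_sub_add_sum_range_le (x := -x) (by rw [abs_neg]; linarith) 2
  rw [abs_neg, sub_neg_eq_add] at h
  norm_num [Finset.sum_range_succ] at h
  calc |log (1 + x) - x + x ^ 2 / 2| = |-x + x ^ 2 / 2 + log (1 + x)| := by ring_nf
    _ ≤ |x| ^ 3 / (1 - |x|) := h
    _ ≤ 2 * |x| ^ 3 := by
      rw [div_le_iff₀ (by linarith)]
      nlinarith [pow_nonneg (abs_nonneg x) 3]

lemma hasSum_one_div_nat_add_one_sq :
    HasSum (fun k : ℕ => 1 / ((k : ℝ) + 1) ^ 2) (π ^ 2 / 6) := by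
  simpa using (hasSum_nat_add_iff' 1).mpr hasSum_zeta_two

lemma summable_div_sub_log_one_add_div (s : ℝ) :
    Summable fun k : ℕ => s / (k + 1) - log (1 + s / (k + 1)) := by
  refine Summable.of_norm_bounded_eventually_nat
    (hasSum_one_div_nat_add_one_sq.summable.mul_left (2 * s ^ 2)) ?_
  have hsmall : Tendsto (fun k : ℕ => s / ((k : ℝ) + 1)) atTop (𝓝 0) :=
    tendsto_const_div_atTop_nhds_zero_nat s |>.comp (tendsto_add_atTop_nat 1) |>.congr
      fun k => by simp
  filter_upwards [(tendsto_order.1 hsmall.abs).2 (1 / 2) (by norm_num)] with k hk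
  rw [Real.norm_eq_abs, abs_sub_comm]
  refine (abs_log_one_add_sub_self_le (by simpa using hk.le)).trans_eq ?_
  rw [div_pow]
  ring

lemma sum_range_succ_div_sub_log_one_add_div {s : ℝ} (hs : -1 < s) (n : ℕ) :
    ∑ k ∈ range (n + 1), (s / (k + 1) - log (1 + s / (k + 1)))
      = BohrMollerup.logGammaSeq (1 + s) n + s * (harmonic (n + 1) - log (n + 1))
        + (1 + s) * (log (n + 1) - log n) := by
  have hsplit : ∀ k : ℕ, log (1 + s + k) = log ((k : ℝ) + 1) + log (1 + s / (k + 1)) := by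
    intro k
    have hk : (0 : ℝ) < k + 1 := by positivity
    have hpos : 0 < 1 + s / (k + 1) := by
      have : 1 + s / (k + 1) = (k + 1 + s) / (k + 1) := by field_simp
      rw [this]
      exact div_pos (by linarith [k.cast_nonneg (α := ℝ)]) hk
    rw [← log_mul hk.ne' hpos.ne']
    congr 1
    field_simp
    ring
  have hfact : ∑ k ∈ range (n + 1), log ((k : ℝ) + 1) = log (n + 1) + log n.factorial := by
    rw [← log_prod (fun k _ => by positivity), ← log_mul (by positivity) (by positivity)]
    congr 1
    exact_mod_cast (prod_range_add_one_eq_factorial (n + 1)).trans (Nat.factorial_succ n)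
  have hharm : s * harmonic (n + 1) = ∑ k ∈ range (n + 1), s / ((k : ℝ) + 1) := by
    simp [harmonic, mul_sum, div_eq_mul_inv]
  simp only [BohrMollerup.logGammaSeq, hsplit, sum_add_distrib, hfact, sum_sub_distrib]
  linear_combination -hharm

theorem hasSum_div_sub_log_one_add_div {s : ℝ} (hs : -1 < s) :
    HasSum (fun k : ℕ => s / (k + 1) - log (1 + s / (k + 1)))
      (log (Gamma (1 + s)) + eulerMascheroniConstant * s) := by
  rw [(summable_div_sub_log_one_add_div s).hasSum_iff_tendsto_nat,
    ← tendsto_add_atTop_iff_nat 1]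
  simp only [sum_range_succ_div_sub_log_one_add_div hs]
  have hharm : Tendsto (fun n : ℕ => (harmonic (n + 1) : ℝ) - log (n + 1)) atTop
      (𝓝 eulerMascheroniConstant) := by
    exact_mod_cast tendsto_harmonic_sub_log.comp (tendsto_add_atTop_nat 1)
  convert ((BohrMollerup.tendsto_log_gamma (by linarith : 0 < 1 + s)).add
    (hharm.const_mul s)).add (tendsto_log_nat_add_one_sub_log.const_mul (1 + s)) using 2
  ring

lemma abs_div_sub_log_one_add_div_sub_le {s c : ℝ} (hs : |s| ≤ 1 / 2) (hc : 1 ≤ c) :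
    |s / c - log (1 + s / c) - s ^ 2 / 2 * (1 / c ^ 2)| ≤ 2 * |s| ^ 3 * (1 / c ^ 2) := by
  have habs : |c| = c := abs_of_pos (by linarith)
  have hx : |s / c| ≤ 1 / 2 := by
    rw [abs_div, habs]
    exact (div_le_self (abs_nonneg s) hc).trans hs
  calc |s / c - log (1 + s / c) - s ^ 2 / 2 * (1 / c ^ 2)|
      = |log (1 + s / c) - s / c + (s / c) ^ 2 / 2| := by
        rw [← abs_neg]; ring_nf
    _ ≤ 2 * |s / c| ^ 3 := abs_log_one_add_sub_self_add_sq_div_two_le hx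
    _ = 2 * |s| ^ 3 * (1 / c ^ 3) := by rw [abs_div, habs]; ring
    _ ≤ 2 * |s| ^ 3 * (1 / c ^ 2) := by gcongr; norm_num

theorem abs_log_Gamma_one_add_add_sub_le {s : ℝ} (hs : |s| ≤ 1 / 2) :
    |log (Gamma (1 + s)) + eulerMascheroniConstant * s - π ^ 2 / 12 * s ^ 2|
      ≤ π ^ 2 / 3 * |s| ^ 3 := by
  have hseries := hasSum_div_sub_log_one_add_div (by linarith [neg_abs_le s] : -1 < s)
  have hquad := hasSum_one_div_nat_add_one_sq.mul_left (s ^ 2 / 2)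
  have hcubic := hasSum_one_div_nat_add_one_sq.mul_left (2 * |s| ^ 3)
  convert (hseries.sub hquad).norm_le_of_bounded hcubic
    fun k => abs_div_sub_log_one_add_div_sub_le hs (by simp) using 1
  · rw [Real.norm_eq_abs]; ring_nf
  · ring

lemma expMeasure_one_eq_withDensity :
    expMeasure 1 = (volume.restrict (Ioi 0)).withDensity fun x => ENNReal.ofReal (exp (-x)) := by
  rw [Measure.restrict_congr_set Ioi_ae_eq_Ici, ← withDensity_indicator measurableSet_Ici,
    expMeasure, gammaMeasure]
  congr 1
  funext x
  by_cases hx : 0 ≤ x <;> simp [gammaPDF, gammaPDFReal, hx]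

lemma integrable_exp_mul_log_expMeasure_one {t : ℝ} (ht : -1 < t) :
    Integrable (fun x => exp (t * log x)) (expMeasure 1) := by
  rw [expMeasure_one_eq_withDensity, integrable_withDensity_iff_integrable_smul' (by fun_prop)
    (by simp)]
  simp only [ENNReal.toReal_ofReal (exp_nonneg _), smul_eq_mul]
  refine (GammaIntegral_convergent (by linarith : 0 < 1 + t)).congr_fun (fun x hx => ?_)
    measurableSet_Ioi
  dsimp only
  rw [rpow_def_of_pos hx, add_sub_cancel_left, mul_comm t]

lemma integral_exp_mul_log_expMeasure_one {t : ℝ} (ht : -1 < t) :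
    ∫ x, exp (t * log x) ∂expMeasure 1 = Gamma (1 + t) := by
  rw [expMeasure_one_eq_withDensity, integral_withDensity_eq_integral_toReal_smul (by fun_prop)
    (by simp), Gamma_eq_integral (by linarith)]
  simp only [ENNReal.toReal_ofReal (exp_nonneg _), smul_eq_mul]
  refine setIntegral_congr_fun measurableSet_Ioi fun x hx => ?_
  rw [rpow_def_of_pos hx, add_sub_cancel_left, mul_comm t]

section LogOfExponential

variable {Ω : Type*} [MeasurableSpace Ω] {μ : Measure Ω} {W : Ω → ℝ} {t : ℝ}

lemma integrable_exp_mul_log_of_map_eq_expMeasure_one (hW : Measurable W)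
    (hlaw : μ.map W = expMeasure 1) (ht : -1 < t) :
    Integrable (fun ω => exp (t * log (W ω))) μ := by
  have h := integrable_exp_mul_log_expMeasure_one ht
  rw [← hlaw] at h
  have hmeas : Measurable fun x => exp (t * log x) := by fun_prop
  exact (integrable_map_measure hmeas.aestronglyMeasurable hW.aemeasurable).mp h

lemma mgf_log_of_map_eq_expMeasure_one (hW : Measurable W)
    (hlaw : μ.map W = expMeasure 1) (ht : -1 < t) :
    mgf (fun ω => log (W ω)) μ t = Gamma (1 + t) := by
  rw [← integral_exp_mul_log_expMeasure_one ht, ← hlaw,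
    integral_map hW.aemeasurable (by fun_prop), mgf]

theorem cgf_sum_mul_log_of_iIndepFun {ι : Type*} [Fintype ι] {W : ι → Ω → ℝ}
    (hW : ∀ i, Measurable (W i)) (hindep : iIndepFun W μ)
    (hlaw : ∀ i, μ.map (W i) = expMeasure 1) {c : ι → ℝ} (hc : ∀ i, -1 < t * c i) :
    cgf (∑ i, fun ω => c i * log (W i ω)) μ t = ∑ i, log (Gamma (1 + t * c i)) := by
  have hX : iIndepFun (fun i ω => c i * log (W i ω)) μ :=
    hindep.comp (fun i x => c i * log x) fun i => by fun_prop
  rw [hX.cgf_sum (fun i => by fun_prop) fun i _ => ?_]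
  · refine sum_congr rfl fun i _ => ?_
    rw [cgf, mgf_const_mul, mul_comm (c i) t,
      mgf_log_of_map_eq_expMeasure_one (hW i) (hlaw i) (hc i)]
  · simpa only [mul_assoc] using
      integrable_exp_mul_log_of_map_eq_expMeasure_one (hW i) (hlaw i) (hc i)

end LogOfExponential

lemma abs_mul_le_one_half_of_abs_le {l x M : ℝ} (hx : |x| ≤ M) (hl : |l| ≤ 1 / (2 * M)) :
    |l * x| ≤ 1 / 2 := by
  rcases ((abs_nonneg x).trans hx).eq_or_lt with hM | hM
  · have hx0 : x = 0 := abs_nonpos_iff.mp (hM ▸ hx)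
    simp [hx0]
  · calc |l * x| = |l| * |x| := abs_mul l x
      _ ≤ 1 / (2 * M) * M := mul_le_mul hl hx (abs_nonneg x) (by positivity)
      _ = 1 / 2 := by field_simp

/-- For `v` in the trace-zero hyperplane, `v ≠ 0`, `|λ| ≤ 1/(2‖v‖_∞)`, and
`W_1, …, W_n` i.i.d. `Exp(1)`, the log-MGF of `S = ∑ v_j log W_j` equals
`∑_j log Γ(1 + λ v_j)`, and there is an absolute constant `C` with
`|log E[e^{λS}] − (π²/12) λ² ∑ v_j²| ≤ C |λ|³ ∑ |v_j|³`. -/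
theorem logMGF_exponential_expansion :
    ∃ C : ℝ, 0 < C ∧
      ∀ (n : ℕ) (hn : 0 < n)
        (Ω : Type) (_ : MeasurableSpace Ω) (μ : Measure Ω) (_ : IsProbabilityMeasure μ)
        (W : Fin n → Ω → ℝ)
        (_ : ∀ j, Measurable (W j))
        (_ : iIndepFun W μ)
        (_ : ∀ j, Measure.map (W j) μ = expMeasure 1)
        (v : Fin n → ℝ) (_ : ∑ j, v j = 0) (_ : v ≠ 0)
        (l : ℝ)
        (_ : |l| ≤ 1 / (2 * Finset.univ.sup'
              (Finset.univ_nonempty_iff.mpr (Fin.pos_iff_nonempty.mp hn))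
              (fun j => |v j|))),
        Real.log (∫ ω, Real.exp (l * ∑ j, v j * Real.log (W j ω)) ∂μ)
            = ∑ j, Real.log (Real.Gamma (1 + l * v j))
          ∧ |Real.log (∫ ω, Real.exp (l * ∑ j, v j * Real.log (W j ω)) ∂μ)
                - Real.pi ^ 2 / 12 * l ^ 2 * ∑ j, (v j) ^ 2|
              ≤ C * |l| ^ 3 * ∑ j, |v j| ^ 3 := by
  refine ⟨π ^ 2 / 3, by positivity, fun n hn Ω _ μ _ W hW hindep hlaw v hv _ l hl => ?_⟩
  have hsmall : ∀ j, |l * v j| ≤ 1 / 2 := fun j =>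
    abs_mul_le_one_half_of_abs_le (le_sup' (fun j => |v j|) (mem_univ j)) hl
  have hlogMGF : log (∫ ω, exp (l * ∑ j, v j * log (W j ω)) ∂μ)
      = ∑ j, log (Gamma (1 + l * v j)) := by
    rw [← cgf_sum_mul_log_of_iIndepFun hW hindep hlaw fun j => ?_]
    · simp only [cgf, mgf, Finset.sum_apply]
    · linarith [neg_abs_le (l * v j), hsmall j]
  refine ⟨hlogMGF, ?_⟩
  have hlinear : ∑ j, eulerMascheroniConstant * (l * v j) = 0 := by
    rw [← mul_sum, ← mul_sum, hv, mul_zero, mul_zero]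
  rw [hlogMGF]
  calc |∑ j, log (Gamma (1 + l * v j)) - π ^ 2 / 12 * l ^ 2 * ∑ j, v j ^ 2|
      = |∑ j, (log (Gamma (1 + l * v j)) + eulerMascheroniConstant * (l * v j)
          - π ^ 2 / 12 * (l * v j) ^ 2)| := by
        rw [sum_sub_distrib, sum_add_distrib, hlinear, add_zero, mul_sum]
        simp only [mul_pow, mul_assoc]
    _ ≤ ∑ j, |log (Gamma (1 + l * v j)) + eulerMascheroniConstant * (l * v j)
          - π ^ 2 / 12 * (l * v j) ^ 2| := abs_sum_le_sum_abs _ _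
    _ ≤ ∑ j, π ^ 2 / 3 * |l * v j| ^ 3 :=
        sum_le_sum fun j _ => abs_log_Gamma_one_add_add_sub_le (hsmall j)
    _ = π ^ 2 / 3 * |l| ^ 3 * ∑ j, |v j| ^ 3 := by
        simp only [abs_mul, mul_pow, mul_sum, mul_assoc]
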